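/- arXiv:1611.03075 — 5 statements merged into one kernel-verified Lean document; each statement's English description precedes it below -/
import Mathlib

section
/- Let G be a finite simple graph on n vertices, let k ≥ 2 be an integer, and let c₁ ≥ c₂ ≥ ⋯ ≥ c_m be the sizes of the connected components of G. Suppose that (i) c₁ ≤ n/k, (ii) the number of components of size at most 2 is at least r·n for some real r > 0, and (iii) c_i ≤ r·n/k for every index i > k. Then the k-section width satisfies w_k(G) ≤ k/2. -/
open Finset

/-- The size (number of vertices) of a connected component of a graph on `Fin n`. -/
noncomputable def compSize {n : ℕ} (G : SimpleGraph (Fin n)) (C : G.ConnectedComponent) : ℕ :=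
  {v : Fin n | G.connectedComponentMk v = C}.ncard

/-- A labelled partition `P : Fin n → Fin k` is balanced if the part sizes pairwise
differ by at most 1. -/
def IsBalancedPartition {n k : ℕ} (P : Fin n → Fin k) : Prop :=
  ∀ j j' : Fin k,
    ((Finset.univ.filter (fun i => P i = j)).card : ℤ)
      ≤ ((Finset.univ.filter (fun i => P i = j')).card : ℤ) + 1

/-- The number of edges of `G` whose two endpoints lie in two distinct parts of `P`. -/
noncomputable def cutSize {n k : ℕ} (G : SimpleGraph (Fin n)) (P : Fin n → Fin k) : ℕ :=
  {e ∈ G.edgeSet | ¬ (Sym2.map P e).IsDiag}.ncard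

/-- The `k`-section width: the minimum number of cross edges over balanced `k`-partitions. -/
noncomputable def kSectionWidth {n : ℕ} (G : SimpleGraph (Fin n)) (k : ℕ) : ℕ :=
  sInf {w | ∃ P : Fin n → Fin k, IsBalancedPartition P ∧ cutSize G P = w}

/-!
Sort the components by size and pack them into `k` bins whose capacities are the balanced part
sizes `⌊n/k⌋` or `⌈n/k⌉`, greedily in that order. A component of size at least 3 is placed whole:
each of the first `k` finds an empty bin, and a later one has size at most `r n / k`, while the at
least `r n` vertices of the components of size at most 2 are still unplaced, so the free capacity
exceeds `k` times its size. A component of size 2 is split only when no bin has two free places;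
it then fills two bins with exactly one free place each, so at most `k / 2` components are split.
Each split component has a single edge, which is the only kind of edge that can be cut.
-/

section Fibers

variable {α β γ : Type*} [Fintype α] [DecidableEq β] [DecidableEq γ]

theorem exists_fiber_card_eq [Fintype γ] (f : α → β) (g : β → γ → ℕ)
    (hg : ∀ b, ∑ j, g b j = #{a | f a = b}) :
    ∃ P : α → γ, ∀ b j, #{a | f a = b ∧ P a = j} = g b j := by
  have E : ∀ b, {a // f a = b} ≃ Σ j, Fin (g b j) := fun b =>
    Fintype.equivOfCardEq (by simp [Fintype.card_subtype, hg])
  refine ⟨fun a => (E (f a) ⟨a, rfl⟩).1, fun b j => ?_⟩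
  rw [← Fintype.card_subtype, ← Fintype.card_fin (g b j)]
  refine Fintype.card_congr <| (Equiv.subtypeSubtypeEquivSubtypeInter _ _).symm.trans <|
    (Equiv.subtypeEquiv (E b) ?_).trans (Equiv.sigmaSubtype j)
  rintro ⟨a, rfl⟩
  rfl

variable {f : α → β} {g : β → γ → ℕ} {P : α → γ}

theorem card_filter_eq_sum_of_card_fiber [Fintype β]
    (hP : ∀ b j, #{a | f a = b ∧ P a = j} = g b j) (j : γ) :
    #{a | P a = j} = ∑ b, g b j := by
  rw [card_eq_sum_card_fiberwise (t := univ) fun a _ => mem_univ (f a)]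
  refine sum_congr rfl fun b _ => ?_
  rw [← hP, filter_filter]
  simp_rw [and_comm]

theorem eq_of_card_fiber (hP : ∀ b j, #{a | f a = b ∧ P a = j} = g b j) {a : α} {j : γ}
    (h : ∀ j', j' ≠ j → g (f a) j' = 0) : P a = j := by
  by_contra hne
  have := hP (f a) (P a)
  rw [h _ hne, card_eq_zero, filter_eq_empty_iff] at this
  exact this (mem_univ a) ⟨rfl, rfl⟩

end Fibers

section Graph

variable {n k : ℕ} (G : SimpleGraph (Fin n))

theorem card_filter_connectedComponentMk_eq {β : Type*} [DecidableEq β]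
    (e : G.ConnectedComponent ≃ β) (i : β) :
    #{v | e (G.connectedComponentMk v) = i} = compSize G (e.symm i) := by
  rw [compSize, ← Set.ncard_coe_finset]
  congr 1
  ext v
  simp [Equiv.eq_symm_apply]

theorem compSize_pos (C : G.ConnectedComponent) : 0 < compSize G C := by
  obtain ⟨v, rfl⟩ := C.exists_rep
  exact (Set.ncard_pos).mpr ⟨v, rfl⟩

theorem kSectionWidth_le_cutSize {P : Fin n → Fin k} (hP : IsBalancedPartition P) :
    kSectionWidth G k ≤ cutSize G P :=
  Nat.sInf_le ⟨P, hP, rfl⟩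

theorem cutSize_le_card {ι : Type*} [DecidableEq ι] (P : Fin n → Fin k) (comp : Fin n → ι)
    (S : Finset ι) (hcut : ∀ u v, G.Adj u v → P u ≠ P v → comp u ∈ S ∧ comp v = comp u)
    (hS : ∀ i ∈ S, #{v | comp v = i} ≤ 2) : cutSize G P ≤ #S := by
  classical
  rw [cutSize, Set.ncard_eq_toFinset_card']
  refine card_le_card_of_forall_subsingleton (fun z i => ∀ x ∈ z, comp x = i) ?_ ?_
  · intro z hz
    induction z using Sym2.ind with
    | h u v =>
      simp only [Set.mem_toFinset, Set.mem_ofPred_eq, SimpleGraph.mem_edgeSet, Sym2.map_mk,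
        Sym2.mk_isDiag_iff] at hz
      obtain ⟨hS, hv⟩ := hcut u v hz.1 hz.2
      exact ⟨comp u, hS, by simp [hv]⟩
  · intro i hi z₁ hz₁ z₂ hz₂
    induction z₁ using Sym2.ind with | h u₁ v₁ => ?_
    induction z₂ using Sym2.ind with | h u₂ v₂ => ?_
    simp only [Set.mem_toFinset, Set.mem_ofPred_eq, SimpleGraph.mem_edgeSet,
      Sym2.mem_iff, forall_eq_or_imp, forall_eq] at hz₁ hz₂
    have hfiber : ({u₂, v₂} : Finset (Fin n)) = ({v | comp v = i} : Finset (Fin n)) :=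
      eq_of_subset_of_card_le (by simp [insert_subset_iff, hz₂.2])
        ((hS i hi).trans (card_pair hz₂.1.1.ne).ge)
    have h₁ : u₁ ∈ ({u₂, v₂} : Finset (Fin n)) := by simp [hfiber, hz₁.2]
    have h₂ : v₁ ∈ ({u₂, v₂} : Finset (Fin n)) := by simp [hfiber, hz₁.2]
    rw [eq_comm, ← Sym2.mem_and_mem_iff hz₁.1.1.ne]
    simpa [Sym2.mem_iff] using And.intro h₁ h₂

end Graph

def balancedSizes (n k : ℕ) (j : Fin k) : ℕ := n / k + if (j : ℕ) < n % k then 1 else 0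

theorem sum_balancedSizes {n k : ℕ} (hk : 0 < k) : ∑ j, balancedSizes n k j = n := by
  simp only [balancedSizes, sum_add_distrib, sum_const, card_univ, Fintype.card_fin, smul_eq_mul,
    sum_boole, Fin.card_filter_val_lt, Nat.cast_id, min_eq_right (Nat.mod_lt n hk).le]
  exact Nat.div_add_mod n k

theorem div_le_balancedSizes {n k : ℕ} (j : Fin k) : n / k ≤ balancedSizes n k j :=
  Nat.le_add_right _ _

theorem balancedSizes_le {n k : ℕ} (j : Fin k) : balancedSizes n k j ≤ n / k + 1 := by
  unfold balancedSizes
  split_ifs <;> omega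

theorem isBalancedPartition_of_card_eq {n k : ℕ} {P : Fin n → Fin k}
    (hP : ∀ j, #{v | P v = j} = balancedSizes n k j) : IsBalancedPartition P := fun j j' => by
  rw [hP, hP]
  have := div_le_balancedSizes (n := n) j'
  have := balancedSizes_le (n := n) j
  omega

section Packing

variable {ι : Type*} [Fintype ι] [DecidableEq ι]

theorem exists_split_row_of_le_one (s : ι → ℕ) (hs : ∀ j, s j ≤ 1) (h2 : 2 ≤ ∑ j, s j) :
    ∃ v : ι → ℕ, ∑ j, v j = 2 ∧ v ≤ s ∧ #{j | v j < s j} + 2 ≤ #{j | 0 < s j} := by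
  have hcard : 1 < #{j | 0 < s j} := by
    calc 1 < ∑ j, s j := h2
      _ ≤ #{j | 0 < s j} := by
        rw [card_filter]
        exact sum_le_sum fun j _ => by split_ifs <;> grind
  obtain ⟨j₁, hj₁, j₂, hj₂, hne⟩ := one_lt_card.mp hcard
  simp only [mem_filter, mem_univ, true_and] at hj₁ hj₂
  refine ⟨Pi.single j₁ 1 + Pi.single j₂ 1, by simp [sum_add_distrib], fun j => ?_, ?_⟩
  · have := hs j
    simp only [Pi.add_apply, Pi.single_apply]
    grind
  · calc #{j | (Pi.single j₁ 1 + Pi.single j₂ 1 : ι → ℕ) j < s j} + 2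
        ≤ #((({j | 0 < s j} : Finset ι).erase j₁).erase j₂) + 2 := by
          gcongr
          intro j hj
          simp only [mem_filter, mem_univ, true_and, mem_erase, Pi.add_apply,
            Pi.single_apply] at hj ⊢
          have := hs j
          grind
      _ = #{j | 0 < s j} := by
        rw [card_erase_of_mem (by simp [hne.symm, hj₂]), card_erase_of_mem (by simp [hj₁])]
        omega

theorem exists_row_of_le_sum [Nonempty ι] (s : ι → ℕ) {x : ℕ} (hx : x ≤ ∑ j, s j)
    (hbig : 3 ≤ x → ∃ j, x ≤ s j) :
    ∃ v : ι → ℕ, ∑ j, v j = x ∧ v ≤ s ∧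
      ((∃ j, v = Pi.single j x) ∧ #{j | v j < s j} ≤ #{j | 0 < s j} ∨
        x = 2 ∧ #{j | v j < s j} + 2 ≤ #{j | 0 < s j}) := by
  by_cases hfit : ∃ j, x ≤ s j
  · obtain ⟨j, hj⟩ := hfit
    refine ⟨Pi.single j x, by simp, fun j' => ?_, Or.inl ⟨⟨j, rfl⟩, card_le_card fun j' => ?_⟩⟩
    · rcases eq_or_ne j' j with rfl | h <;> simp [*]
    · simp only [mem_filter, mem_univ, true_and]
      omega
  push Not at hfit
  have hx3 : x < 3 := by
    by_contra! h
    obtain ⟨j, hj⟩ := hbig h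
    exact (hfit j).not_ge hj
  have hx2 : x = 2 := by
    have := hfit (Classical.arbitrary ι)
    have : x ≠ 1 := by
      rintro rfl
      simp_all
    omega
  obtain ⟨v, hv⟩ := exists_split_row_of_le_one s (fun j => by have := hfit j; omega) (hx2 ▸ hx)
  exact ⟨v, hx2 ▸ hv.1, hv.2.1, Or.inr ⟨hx2, hv.2.2⟩⟩

theorem exists_sum_eq_zero_of_lt_card {p : ℕ} (g : Fin p → ι → ℕ)
    (hg : ∀ i, ∃ j a, g i = Pi.single j a) (hp : p < Fintype.card ι) : ∃ j, ∑ i, g i j = 0 := by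
  choose col a hcol using hg
  obtain ⟨j, -, hj⟩ := exists_mem_notMem_of_card_lt_card (s := univ.image col) (t := univ)
    (card_image_le.trans_lt (by simpa using hp))
  refine ⟨j, sum_eq_zero fun i _ => ?_⟩
  rw [hcol, Pi.single_apply, if_neg]
  exact fun h => hj (h ▸ mem_image_of_mem col (mem_univ i))

/-- `g i j` is the number of vertices of item `i` put into bin `j`. In `potential_le`, splitting an
item closes two bins that had one free place each, so the potential never grows. -/
structure IsPacking {p : ℕ} (t : ι → ℕ) (b : Fin p → ℕ) (g : Fin p → ι → ℕ) : Prop where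
  sum_row : ∀ i, ∑ j, g i j = b i
  sum_col_le : ∀ j, ∑ i, g i j ≤ t j
  single_or_eq_two : ∀ i, (∃ j, g i = Pi.single j (b i)) ∨ b i = 2
  potential_le : 2 * #{i | ¬∃ j, g i = Pi.single j (b i)} + #{j | ∑ i, g i j < t j} ≤ Fintype.card ι

namespace IsPacking

variable {p : ℕ} {t : ι → ℕ} {b : Fin (p + 1) → ℕ} {g : Fin p → ι → ℕ}

theorem sum_slack {b : Fin p → ℕ} (hg : IsPacking t b g) :
    ∑ j, (t j - ∑ i, g i j) = ∑ j, t j - ∑ i, b i := by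
  rw [sum_tsub_distrib _ fun j _ => hg.sum_col_le j, sum_comm]
  simp [hg.sum_row]

theorem exists_le_slack [Nonempty ι] (hg : IsPacking t (fun i => b i.castSucc) g)
    (hmono : Antitone b)
    (hfit : ∀ j, b (Fin.last p) ≤ t j) (h3 : 3 ≤ b (Fin.last p))
    (hbig : Fintype.card ι ≤ p →
      ∑ i' with 3 ≤ b i', b i' + Fintype.card ι * b (Fin.last p) ≤ ∑ j, t j) :
    ∃ j, b (Fin.last p) ≤ t j - ∑ i, g i j := by
  have hlast_le : ∀ i : Fin p, b (Fin.last p) ≤ b i.castSucc :=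
    fun i => hmono (Fin.castSucc_lt_last i).le
  rcases lt_or_ge p (Fintype.card ι) with hp | hp
  · have hsingle : ∀ i, ∃ j a, g i = Pi.single j a := fun i => by
      obtain ⟨j, hj⟩ := (hg.single_or_eq_two i).resolve_right (by have := hlast_le i; omega)
      exact ⟨j, _, hj⟩
    obtain ⟨j, hj⟩ := exists_sum_eq_zero_of_lt_card g hsingle hp
    exact ⟨j, by simpa [hj] using hfit j⟩
  · have hall : ∑ i with 3 ≤ b i, b i = ∑ i, b i := sum_filter_of_ne fun i _ _ => by
      induction i using Fin.lastCases with
      | last => exact h3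
      | cast i => exact h3.trans (hlast_le i)
    have hbig := hbig hp
    rw [hall, Fin.sum_univ_castSucc] at hbig
    obtain ⟨j, -, hj⟩ := exists_le_of_sum_le (s := univ) univ_nonempty
      (f := fun _ => b (Fin.last p)) (g := fun j => t j - ∑ i, g i j)
      (by simp only [sum_const, card_univ, smul_eq_mul, hg.sum_slack]; omega)
    exact ⟨j, hj⟩

theorem snoc (hg : IsPacking t (fun i => b i.castSucc) g) {v : ι → ℕ}
    (hvsum : ∑ j, v j = b (Fin.last p)) (hvle : ∀ j, v j ≤ t j - ∑ i, g i j)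
    (hv : (∃ j, v = Pi.single j (b (Fin.last p))) ∧
          #{j | v j < t j - ∑ i, g i j} ≤ #{j | 0 < t j - ∑ i, g i j} ∨
        b (Fin.last p) = 2 ∧ #{j | v j < t j - ∑ i, g i j} + 2 ≤ #{j | 0 < t j - ∑ i, g i j}) :
    IsPacking t b (Fin.snoc g v) := by
  have hcol_snoc : ∀ j, ∑ i, Fin.snoc (α := fun _ => ι → ℕ) g v i j = ∑ i, g i j + v j := by
    simp [Fin.sum_univ_castSucc]
  refine ⟨fun i => ?_, fun j => ?_, fun i => ?_, ?_⟩
  · induction i using Fin.lastCases <;> simp [hvsum, hg.sum_row]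
  · have := hvle j
    have := hg.sum_col_le j
    rw [hcol_snoc]
    omega
  · induction i using Fin.lastCases with
    | last => simpa using hv.imp (And.left) (And.left)
    | cast i => simpa using hg.single_or_eq_two i
  · have hsplit : #{i | ¬∃ j, Fin.snoc (α := fun _ => ι → ℕ) g v i = Pi.single j (b i)} =
        #{i | ¬∃ j, g i = Pi.single j (b i.castSucc)} +
          if ∃ j, v = Pi.single j (b (Fin.last p)) then 0 else 1 := by
      rw [card_filter, card_filter, Fin.sum_univ_castSucc]
      simp only [Fin.snoc_castSucc, Fin.snoc_last]
      split_ifs <;> simp_all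
    have hslack : #{j | ∑ i, Fin.snoc (α := fun _ => ι → ℕ) g v i j < t j} =
        #{j | v j < t j - ∑ i, g i j} :=
      congrArg card (filter_congr fun j _ => by have := hg.sum_col_le j; rw [hcol_snoc]; omega)
    have hpos : #{j | 0 < t j - ∑ i, g i j} = #{j | ∑ i, g i j < t j} :=
      congrArg card (filter_congr fun j _ => by omega)
    have := hg.potential_le
    rw [hsplit, hslack]
    rcases hv with ⟨hvc, hvpot⟩ | ⟨-, hvpot⟩ <;> split_ifs <;> omega

theorem sum_col_eq {b : Fin p → ℕ} (hg : IsPacking t b g) (h : ∑ i, b i = ∑ j, t j) (j : ι) :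
    ∑ i, g i j = t j := by
  refine (sum_eq_sum_iff_of_le fun j _ => hg.sum_col_le j).mp ?_ j (mem_univ j)
  rw [sum_comm, ← h]
  exact sum_congr rfl fun i _ => hg.sum_row i

end IsPacking

theorem exists_isPacking [Nonempty ι] (t : ι → ℕ) {p : ℕ} (b : Fin p → ℕ) (hmono : Antitone b)
    (hfit : ∀ i j, b i ≤ t j) (hsum : ∑ i, b i ≤ ∑ j, t j)
    (hbig : ∀ i : Fin p, Fintype.card ι ≤ i → 3 ≤ b i →
      ∑ i' with 3 ≤ b i', b i' + Fintype.card ι * b i ≤ ∑ j, t j) :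
    ∃ g, IsPacking t b g := by
  induction p with
  | zero =>
    exact ⟨Fin.elim0, fun i => i.elim0, by simp, fun i => i.elim0, by simpa using card_le_univ _⟩
  | succ p ih =>
    rw [Fin.sum_univ_castSucc] at hsum
    obtain ⟨g, hg⟩ := ih (fun i => b i.castSucc)
      (hmono.comp_monotone Fin.strictMono_castSucc.monotone) (fun i => hfit _) (by omega)
      fun i hi h3 => le_trans (by
        gcongr
        rw [sum_filter, sum_filter, Fin.sum_univ_castSucc]
        exact Nat.le_add_right _ _) (hbig i.castSucc hi h3)
    obtain ⟨v, hvsum, hvle, hv⟩ := exists_row_of_le_sum (fun j => t j - ∑ i, g i j)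
      (by rw [hg.sum_slack]; omega)
      fun h3 => hg.exists_le_slack hmono (hfit _) h3 fun hp => hbig _ (by simpa using hp) h3
    exact ⟨_, hg.snoc hvsum hvle hv⟩

end Packing

theorem sum_filter_add_mul_le {n m k : ℕ} (hk : 0 < k) (c : Fin m → ℕ) (hc : ∀ i, 0 < c i)
    (hn : ∑ i, c i = n) {r : ℝ} (h2 : r * n ≤ #{i | c i ≤ 2}) {i : Fin m}
    (h3 : (c i : ℝ) ≤ r * n / k) : ∑ i' with 3 ≤ c i', c i' + k * c i ≤ n := by
  have hsmall : k * c i ≤ #{i | c i ≤ 2} := by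
    have := (le_div_iff₀ (by positivity : (0 : ℝ) < k)).mp h3
    exact_mod_cast (by push_cast; linarith : ((k * c i : ℕ) : ℝ) ≤ #{i | c i ≤ 2})
  have hsplit := sum_filter_add_sum_filter_not univ (fun i' => 3 ≤ c i') c
  have hcard : #{i' | ¬3 ≤ c i'} ≤ ∑ i' with ¬3 ≤ c i', c i' := by
    rw [card_eq_sum_ones]
    exact sum_le_sum fun i' _ => hc i'
  simp only [not_le, Nat.lt_succ_iff] at hsplit hcard
  omega

theorem kSectionWidth_le_of_isPacking {n k m : ℕ} (hk : 0 < k) (G : SimpleGraph (Fin n))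
    (comp : Fin n → Fin m) (hcomp : ∀ u v, G.Adj u v → comp u = comp v) {c : Fin m → ℕ}
    (hc : ∀ i, #{v | comp v = i} = c i) (hn : ∑ i, c i = n) {g : Fin m → Fin k → ℕ}
    (hg : IsPacking (balancedSizes n k) c g) : kSectionWidth G k ≤ k / 2 := by
  have hsum : ∑ i, c i = ∑ j, balancedSizes n k j := by rw [hn, sum_balancedSizes hk]
  obtain ⟨P, hP⟩ := exists_fiber_card_eq comp g fun i => by rw [hg.sum_row, hc]
  have hbal : IsBalancedPartition P := isBalancedPartition_of_card_eq fun j => by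
    rw [card_filter_eq_sum_of_card_fiber hP, hg.sum_col_eq hsum]
  have hcut : cutSize G P ≤ #{i | ¬∃ j, g i = Pi.single j (c i)} := by
    refine cutSize_le_card G P comp _ (fun u v huv hne => ?_) fun i hi => ?_
    · have hvu : comp v = comp u := (hcomp u v huv).symm
      refine ⟨mem_filter.mpr ⟨mem_univ _, fun ⟨j, hj⟩ => hne ?_⟩, hvu⟩
      have hcol : ∀ w, comp w = comp u → P w = j := fun w hw =>
        eq_of_card_fiber hP fun j' hj' => by rw [hw, hj, Pi.single_eq_of_ne hj']
      rw [hcol u rfl, hcol v hvu]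
    · rw [hc]
      exact ((hg.single_or_eq_two i).resolve_left (mem_filter.mp hi).2).le
  have hpot := hg.potential_le
  rw [Fintype.card_fin] at hpot
  -- `convert` only reconciles the decidability instances of the two filters
  have hsplit : 2 * #{i | ¬∃ j, g i = Pi.single j (c i)} ≤ k := by
    convert Nat.le_of_add_right_le hpot
  exact (kSectionWidth_le_cutSize G hbal).trans (hcut.trans (by omega))

theorem ksection_le_of_small_components_general
    {n k m : ℕ} (hk : 2 ≤ k) (G : SimpleGraph (Fin n))
    (c : Fin m → ℕ) (hmono : Antitone c)
    (e : G.ConnectedComponent ≃ Fin m)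
    (hsize : ∀ C : G.ConnectedComponent, compSize G C = c (e C))
    (r : ℝ)
    (h1 : ∀ i : Fin m, (c i : ℝ) ≤ (n : ℝ) / k)
    (h2 : r * n ≤ ((Finset.univ.filter (fun i : Fin m => c i ≤ 2)).card : ℝ))
    (h3 : ∀ i : Fin m, k ≤ (i : ℕ) → (c i : ℝ) ≤ r * n / k) :
    (kSectionWidth G k : ℝ) ≤ (k : ℝ) / 2 := by
  have hk0 : 0 < k := by omega
  have : Nonempty (Fin k) := ⟨⟨0, hk0⟩⟩
  set comp : Fin n → Fin m := fun v => e (G.connectedComponentMk v)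
  have hc : ∀ i, #{v | comp v = i} = c i := fun i => by
    rw [card_filter_connectedComponentMk_eq, hsize, Equiv.apply_symm_apply]
  have hpos : ∀ i, 0 < c i := fun i => by simpa [hsize] using compSize_pos G (e.symm i)
  have hn : ∑ i, c i = n := by
    rw [← Fintype.card_fin n, ← card_univ,
      card_eq_sum_card_fiberwise (t := univ) fun v _ => mem_univ (comp v)]
    exact sum_congr rfl fun i _ => (hc i).symm
  have hfit : ∀ i j, c i ≤ balancedSizes n k j := fun i j => by
    refine le_trans ?_ (div_le_balancedSizes j)
    rw [Nat.le_div_iff_mul_le hk0]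
    exact_mod_cast (le_div_iff₀ (by positivity)).mp (h1 i)
  obtain ⟨g, hg⟩ := exists_isPacking _ c hmono hfit (by rw [hn, sum_balancedSizes hk0])
    fun i hi _ => by
      rw [sum_balancedSizes hk0, Fintype.card_fin]
      exact sum_filter_add_mul_le hk0 c hpos hn h2 (h3 i (by simpa using hi))
  have hcomp : ∀ u v, G.Adj u v → comp u = comp v := fun u v huv => by
    simp [comp, SimpleGraph.ConnectedComponent.sound huv.reachable]
  exact le_trans (by exact_mod_cast kSectionWidth_le_of_isPacking hk0 G comp hcomp hc hn hg)
    Nat.cast_div_le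

theorem ksection_le_of_small_components
    {n k m : ℕ} (hk : 2 ≤ k) (G : SimpleGraph (Fin n))
    (c : Fin m → ℕ) (hmono : Antitone c)
    (e : G.ConnectedComponent ≃ Fin m)
    (hsize : ∀ C : G.ConnectedComponent, compSize G C = c (e C))
    (r : ℝ) (hr : 0 < r)
    (h1 : ∀ i : Fin m, (c i : ℝ) ≤ (n : ℝ) / k)
    (h2 : r * n ≤ ((Finset.univ.filter (fun i : Fin m => c i ≤ 2)).card : ℝ))
    (h3 : ∀ i : Fin m, k ≤ (i : ℕ) → (c i : ℝ) ≤ r * n / k) :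
    (kSectionWidth G k : ℝ) ≤ (k : ℝ) / 2 :=
  ksection_le_of_small_components_general hk G c hmono e hsize r h1 h2 h3
end

section
/- For each n, let G_n be a finite simple graph on n vertices, and suppose there is a constant C such that for all n, the sum over all vertices v of (deg_{G_n}(v))² is at most C·n. Then for every ε > 0 and every integer r ≥ 1 there exists δ > 0 such that for all n and every vertex subset U of G_n with |U| ≤ δ·n, the sum of the degrees of all vertices in the closed r-neighborhood N[U,r] is at most ε·n. -/
open Finset

/-- The closed `r`-neighborhood of a vertex set `U`: all vertices at graph distance
at most `r` from some vertex of `U`. -/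
def closedNbhd {n : ℕ} (G : SimpleGraph (Fin n)) [DecidableRel G.Adj]
    (U : Finset (Fin n)) : ℕ → Finset (Fin n)
  | 0 => U
  | (r + 1) => closedNbhd G U r ∪ (closedNbhd G U r).biUnion (fun u => G.neighborFinset u)

/-!
By Cauchy–Schwarz, a vertex set of size `x n` has degree sum at most `√(C x) n`, and the
degree sum of `N[U,k]` bounds the number of new vertices in `N[U,k+1]`. So the density of
`N[U,k]` is at most `g^[k] δ` with `g x = x + √(C x)`, and the degree sum of `N[U,r]` is at most
`√(C g^[r] δ) n`. This is a continuous function of `δ` vanishing at `0`, hence small for small `δ`.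
-/

noncomputable def nbhdDensityStep (C x : ℝ) : ℝ := x + √(C * x)

lemma continuous_nbhdDensityStep (C : ℝ) : Continuous (nbhdDensityStep C) :=
  continuous_id.add (continuous_const.mul continuous_id).sqrt

lemma nbhdDensityStep_zero (C : ℝ) : nbhdDensityStep C 0 = 0 := by
  simp [nbhdDensityStep]

lemma exists_pos_le_of_continuousAt_zero {f : ℝ → ℝ} (hf : ContinuousAt f 0) (hf0 : f 0 = 0)
    {ε : ℝ} (hε : 0 < ε) : ∃ δ > 0, f δ ≤ ε := by
  obtain ⟨δ, hδ, hfδ⟩ := Metric.continuousAt_iff.mp hf ε hε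
  have hclose : dist (δ / 2) 0 < δ := by
    rw [Real.dist_0_eq_abs, abs_of_pos (half_pos hδ)]
    exact half_lt_self hδ
  have := hfδ hclose
  rw [hf0, Real.dist_0_eq_abs] at this
  exact ⟨δ / 2, half_pos hδ, (le_abs_self _).trans this.le⟩

lemma sum_degree_le_of_card_le {V : Type*} [Fintype V] {G : SimpleGraph V}
    [DecidableRel G.Adj] {C x : ℝ} {n : ℕ} (hdeg : ∑ v, (G.degree v : ℝ) ^ 2 ≤ C * n)
    {S : Finset V} (hS : (S.card : ℝ) ≤ x * n) :
    ∑ v ∈ S, (G.degree v : ℝ) ≤ √(C * x) * n := by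
  have hsq : (∑ v ∈ S, (G.degree v : ℝ)) ^ 2 ≤ (C * x) * (n : ℝ) ^ 2 :=
    calc (∑ v ∈ S, (G.degree v : ℝ)) ^ 2
        ≤ S.card * ∑ v ∈ S, (G.degree v : ℝ) ^ 2 := sq_sum_le_card_mul_sum_sq
      _ ≤ (x * n) * (C * n) := by
          refine mul_le_mul hS ((sum_le_univ_sum_of_nonneg fun _ => by positivity).trans hdeg)
            (sum_nonneg fun _ _ => by positivity) ((Nat.cast_nonneg _).trans hS)
      _ = (C * x) * (n : ℝ) ^ 2 := by ring
  calc ∑ v ∈ S, (G.degree v : ℝ)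
      = √((∑ v ∈ S, (G.degree v : ℝ)) ^ 2) :=
        (Real.sqrt_sq (sum_nonneg fun _ _ => by positivity)).symm
    _ ≤ √((C * x) * (n : ℝ) ^ 2) := Real.sqrt_le_sqrt hsq
    _ = √(C * x) * n := by rw [Real.sqrt_mul' _ (by positivity), Real.sqrt_sq (Nat.cast_nonneg _)]

lemma card_closedNbhd_succ_le {n : ℕ} (G : SimpleGraph (Fin n)) [DecidableRel G.Adj]
    (U : Finset (Fin n)) (k : ℕ) :
    (closedNbhd G U (k + 1)).card ≤ (closedNbhd G U k).card + ∑ v ∈ closedNbhd G U k, G.degree v :=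
  (card_union_le _ _).trans (Nat.add_le_add_left card_biUnion_le _)

lemma card_closedNbhd_le {n : ℕ} {G : SimpleGraph (Fin n)} [DecidableRel G.Adj] {C δ : ℝ}
    (hdeg : ∑ v, (G.degree v : ℝ) ^ 2 ≤ C * n) {U : Finset (Fin n)} (hU : (U.card : ℝ) ≤ δ * n)
    (k : ℕ) : ((closedNbhd G U k).card : ℝ) ≤ (nbhdDensityStep C)^[k] δ * n := by
  induction k with
  | zero => exact hU
  | succ k ih =>
    rw [Function.iterate_succ_apply', nbhdDensityStep, add_mul]
    calc ((closedNbhd G U (k + 1)).card : ℝ)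
        ≤ (closedNbhd G U k).card + ∑ v ∈ closedNbhd G U k, (G.degree v : ℝ) := by
          exact_mod_cast card_closedNbhd_succ_le G U k
      _ ≤ _ := add_le_add ih (sum_degree_le_of_card_le hdeg ih)

theorem degree_sum_nbhd_small
    (G : ∀ n, SimpleGraph (Fin n)) [inst : ∀ n, DecidableRel (G n).Adj] (C : ℝ)
    (hdeg : ∀ n, (∑ v : Fin n, ((G n).degree v : ℝ) ^ 2) ≤ C * n) :
    ∀ ε : ℝ, 0 < ε → ∀ r : ℕ, 1 ≤ r → ∃ δ : ℝ, 0 < δ ∧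
      ∀ n, ∀ U : Finset (Fin n), (U.card : ℝ) ≤ δ * n →
        (∑ v ∈ closedNbhd (G n) U r, ((G n).degree v : ℝ)) ≤ ε * n := by
  intro ε hε r _
  have hcont : Continuous fun x => √(C * (nbhdDensityStep C)^[r] x) :=
    (continuous_const.mul ((continuous_nbhdDensityStep C).iterate r)).sqrt
  have hzero : √(C * (nbhdDensityStep C)^[r] 0) = 0 := by
    rw [Function.iterate_fixed (nbhdDensityStep_zero C), mul_zero, Real.sqrt_zero]
  obtain ⟨δ, hδ, hδε⟩ := exists_pos_le_of_continuousAt_zero hcont.continuousAt hzero hε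
  refine ⟨δ, hδ, fun n U hU => ?_⟩
  calc ∑ v ∈ closedNbhd (G n) U r, ((G n).degree v : ℝ)
      ≤ √(C * (nbhdDensityStep C)^[r] δ) * n :=
        sum_degree_le_of_card_le (hdeg n) (card_closedNbhd_le (hdeg n) hU r)
    _ ≤ ε * n := mul_le_mul_of_nonneg_right hδε (Nat.cast_nonneg n)
end

section
/- For each n, let d⁽ⁿ⁾ : Fin n → ℕ be a degree sequence. Suppose there is a probability mass function (p_k)_{k ∈ ℕ} with ∑_k k²·p_k < ∞ such that for every k ∈ ℕ, #{i : d⁽ⁿ⁾_i = k}/n → p_k as n → ∞, and moreover (1/n)∑_i (d⁽ⁿ⁾_i)² → ∑_k k²·p_k. Then the maximum degree satisfies (max_i d⁽ⁿ⁾_i)/√n → 0 as n → ∞. -/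
open Finset Filter

theorem max_degree_little_o_sqrt
    (d : ∀ n : ℕ, Fin n → ℕ)
    (p : ℕ → ℝ) (hp0 : ∀ k, 0 ≤ p k) (hpsummable : Summable p) (hpone : ∑' k, p k = 1)
    (hsum2 : Summable (fun k : ℕ => (k : ℝ) ^ 2 * p k))
    (hconv : ∀ k : ℕ,
      Tendsto (fun n => ((Finset.univ.filter (fun i : Fin n => d n i = k)).card : ℝ) / n)
        atTop (nhds (p k)))
    (hsec : Tendsto (fun n => (∑ i : Fin n, (d n i : ℝ) ^ 2) / n)
        atTop (nhds (∑' k : ℕ, (k : ℝ) ^ 2 * p k))) :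
    Tendsto (fun n => ((Finset.univ.sup (d n) : ℕ) : ℝ) / Real.sqrt n) atTop (nhds 0) := by
  set S := ∑' k : ℕ, (k : ℝ) ^ 2 * p k with hS
  -- fiber identity
  have fiber : ∀ (n K : ℕ),
      ∑ k ∈ Finset.range K, (k : ℝ) ^ 2 * ((Finset.univ.filter (fun i : Fin n => d n i = k)).card : ℝ)
      = ∑ i ∈ Finset.univ.filter (fun i : Fin n => d n i < K), (d n i : ℝ) ^ 2 := by
    intro n K
    rw [← Finset.sum_fiberwise_of_maps_to (g := d n) (t := Finset.range K)
        (fun i hi => Finset.mem_range.2 (Finset.mem_filter.1 hi).2)]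
    refine Finset.sum_congr rfl fun k hk => ?_
    rw [Finset.filter_filter]
    have hset : Finset.filter (fun i : Fin n => d n i < K ∧ d n i = k) Finset.univ
        = Finset.filter (fun i : Fin n => d n i = k) Finset.univ := by
      apply Finset.filter_congr
      intro i _
      constructor
      · exact fun h => h.2
      · exact fun h => ⟨h ▸ Finset.mem_range.1 hk, h⟩
    rw [hset]
    have hterm : ∑ i ∈ Finset.filter (fun i : Fin n => d n i = k) Finset.univ, (d n i : ℝ)^2
        = (Finset.filter (fun i : Fin n => d n i = k) Finset.univ).card • ((k:ℝ)^2) := by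
      rw [← Finset.sum_const]
      exact Finset.sum_congr rfl fun i hi => by rw [(Finset.mem_filter.1 hi).2]
    rw [hterm, nsmul_eq_mul, mul_comm]
  -- low convergence
  have lowconv : ∀ K : ℕ,
      Tendsto (fun n => (∑ i ∈ Finset.univ.filter (fun i : Fin n => d n i < K), (d n i : ℝ) ^ 2) / n)
        atTop (nhds (∑ k ∈ Finset.range K, (k : ℝ) ^ 2 * p k)) := by
    intro K
    have h : ∀ n : ℕ, (∑ i ∈ Finset.univ.filter (fun i : Fin n => d n i < K), (d n i : ℝ) ^ 2) / n
        = ∑ k ∈ Finset.range K, (k : ℝ) ^ 2 * (((Finset.univ.filter (fun i : Fin n => d n i = k)).card : ℝ) / n) := by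
      intro n
      rw [← fiber n K, Finset.sum_div]
      exact Finset.sum_congr rfl fun k _ => (mul_div_assoc _ _ _)
    simp only [h]
    exact tendsto_finset_sum _ fun k _ => (hconv k).const_mul _
  -- high convergence
  have key : ∀ K : ℕ,
      Tendsto (fun n => (∑ i ∈ Finset.univ.filter (fun i : Fin n => K ≤ d n i), (d n i : ℝ) ^ 2) / n)
        atTop (nhds (S - ∑ k ∈ Finset.range K, (k : ℝ) ^ 2 * p k)) := by
    intro K
    have hsplit : ∀ n : ℕ,
        (∑ i ∈ Finset.univ.filter (fun i : Fin n => K ≤ d n i), (d n i : ℝ) ^ 2) / n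
        = (∑ i : Fin n, (d n i : ℝ) ^ 2) / n
          - (∑ i ∈ Finset.univ.filter (fun i : Fin n => d n i < K), (d n i : ℝ) ^ 2) / n := by
      intro n
      rw [← sub_div]
      congr 1
      have h := Finset.sum_filter_add_sum_filter_not (Finset.univ : Finset (Fin n))
        (fun i => d n i < K) (fun i => (d n i : ℝ) ^ 2)
      simp only [not_lt] at h
      linarith
    simp only [hsplit]
    exact hsec.sub (lowconv K)
  -- squares tendsto 0
  have A : Tendsto (fun n => ((Finset.univ.sup (d n) : ℕ) : ℝ) ^ 2 / n) atTop (nhds 0) := by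
    rw [NormedAddCommGroup.tendsto_nhds_zero]
    intro ε hε
    have htail : Tendsto (fun K => S - ∑ k ∈ Finset.range K, (k : ℝ) ^ 2 * p k) atTop (nhds 0) := by
      have h1 := hsum2.hasSum.tendsto_sum_nat
      have h2 := (tendsto_const_nhds (x := S) (f := (atTop : Filter ℕ))).sub h1
      simpa [← hS] using h2
    obtain ⟨K, hK⟩ := (htail.eventually (gt_mem_nhds (show (0:ℝ) < ε/4 by linarith))).exists
    have hhigh : ∀ᶠ n in atTop,
        (∑ i ∈ Finset.univ.filter (fun i : Fin n => K ≤ d n i), (d n i : ℝ) ^ 2) / n < ε / 2 :=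
      (key K).eventually (gt_mem_nhds (by linarith))
    have hKn : ∀ᶠ n : ℕ in atTop, ((K : ℝ)^2) / n < ε / 2 := by
      have := tendsto_const_div_atTop_nhds_zero_nat ((K : ℝ)^2)
      exact this.eventually (gt_mem_nhds (by linarith))
    filter_upwards [hhigh, hKn, eventually_ge_atTop 1] with n h1 h2 hn1
    have hnpos : (0:ℝ) < n := by exact_mod_cast hn1
    set M := Finset.univ.sup (d n) with hM
    have hMbound : ((M : ℕ) : ℝ)^2 ≤ (K:ℝ)^2
        + ∑ i ∈ Finset.univ.filter (fun i : Fin n => K ≤ d n i), (d n i : ℝ) ^ 2 := by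
      have hne : (Finset.univ : Finset (Fin n)).Nonempty := by
        have : Nonempty (Fin n) := ⟨⟨0, hn1⟩⟩
        exact Finset.univ_nonempty
      obtain ⟨i0, _, hi0⟩ := Finset.exists_mem_eq_sup Finset.univ hne (d n)
      have hsumnn : (0:ℝ) ≤ ∑ i ∈ Finset.univ.filter (fun i : Fin n => K ≤ d n i), (d n i : ℝ) ^ 2 :=
        Finset.sum_nonneg fun i _ => sq_nonneg _
      by_cases hcase : M < K
      · have : ((M:ℕ):ℝ)^2 ≤ (K:ℝ)^2 := by
          have : ((M:ℕ):ℝ) ≤ (K:ℝ) := by exact_mod_cast hcase.le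
          exact pow_le_pow_left₀ (by positivity) this 2
        linarith
      · push_neg at hcase
        have hi0mem : i0 ∈ Finset.univ.filter (fun i : Fin n => K ≤ d n i) := by
          simp [← hi0, hcase]
          exact hcase
        have : ((M:ℕ):ℝ)^2 ≤ ∑ i ∈ Finset.univ.filter (fun i : Fin n => K ≤ d n i), (d n i : ℝ) ^ 2 := by
          have := Finset.single_le_sum (f := fun i => (d n i : ℝ)^2)
            (fun i _ => sq_nonneg _) hi0mem
          rw [hM, hi0]
          exact this
        linarith [sq_nonneg (K:ℝ)]
    have hdiv : ((M:ℕ):ℝ)^2 / n ≤ (K:ℝ)^2 / n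
        + (∑ i ∈ Finset.univ.filter (fun i : Fin n => K ≤ d n i), (d n i : ℝ) ^ 2) / n := by
      rw [← add_div]
      gcongr
    have hnn : (0:ℝ) ≤ ((M:ℕ):ℝ)^2 / n := by positivity
    rw [Real.norm_eq_abs, abs_of_nonneg hnn]
    calc ((M:ℕ):ℝ)^2 / n ≤ _ := hdiv
      _ < ε/2 + ε/2 := by linarith
      _ = ε := by ring
  have heq : ∀ n : ℕ, ((Finset.univ.sup (d n) : ℕ) : ℝ) / Real.sqrt n
      = Real.sqrt (((Finset.univ.sup (d n) : ℕ) : ℝ)^2 / n) := by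
    intro n
    rw [Real.sqrt_div (sq_nonneg _), Real.sqrt_sq (Nat.cast_nonneg _)]
  have hc := (Real.continuous_sqrt.tendsto' 0 0 Real.sqrt_zero).comp A
  exact hc.congr fun n => (heq n).symm
end

section
/- For every real μ > 2 there exists c with 0 < c < √μ/4 such that (1/4 − c/√μ)^{−(1/4 − c/√μ)} · (1/4 + c/√μ)^{−(1/4 + c/√μ)} < 2^{1 − 1/μ}. In particular, c*(μ) := inf{c > 0 : (1/4 − c/√μ)^{−(1/4 − c/√μ)}·(1/4 + c/√μ)^{−(1/4 + c/√μ)} − 2^{1−1/μ} < 0} satisfies c*(μ) < √μ/4. -/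
/-- The function `f(c,μ)` from Theorem 2 (iii); real powers are `Real.rpow`. -/
noncomputable def maxCutF (μ c : ℝ) : ℝ :=
  (1 / 4 - c / Real.sqrt μ) ^ (-(1 / 4 - c / Real.sqrt μ))
    * (1 / 4 + c / Real.sqrt μ) ^ (-(1 / 4 + c / Real.sqrt μ))
    - (2 : ℝ) ^ (1 - 1 / μ)

/-- The threshold `c*(μ) = inf {c > 0 : f(c,μ) < 0}`. -/
noncomputable def cStar (μ : ℝ) : ℝ :=
  sInf {c : ℝ | 0 < c ∧ maxCutF μ c < 0}

open Real Filter Topology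

lemma tendsto_rpow_neg_self : Tendsto (fun t : ℝ => t ^ (-t)) (𝓝[>] (0:ℝ)) (𝓝 1) := by
  have h : Tendsto (fun t : ℝ => Real.log t * t) (𝓝[>] (0:ℝ)) (𝓝 0) := by
    have := tendsto_log_mul_rpow_nhdsGT_zero (one_pos)
    simpa using this
  have hneg : Tendsto (fun t : ℝ => -(Real.log t * t)) (𝓝[>] (0:ℝ)) (𝓝 0) := by
    simpa using h.neg
  have h2 : Tendsto (fun t : ℝ => Real.exp (-(Real.log t * t))) (𝓝[>] (0:ℝ)) (𝓝 1) := by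
    have := (Real.continuous_exp.tendsto 0).comp hneg
    simpa [Function.comp_def] using this
  refine h2.congr' ?_
  filter_upwards [self_mem_nhdsWithin] with t ht
  rw [Real.rpow_def_of_pos ht]
  ring_nf

lemma gtendsto : Tendsto (fun x : ℝ =>
    (1/4 - x) ^ (-(1/4 - x)) * (1/4 + x) ^ (-(1/4 + x)))
    (𝓝[<] (1/4 : ℝ)) (𝓝 ((2:ℝ) ^ (1/2 : ℝ))) := by
  have h1 : Tendsto (fun x : ℝ => 1/4 - x) (𝓝[<] (1/4:ℝ)) (𝓝[>] (0:ℝ)) := by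
    apply tendsto_nhdsWithin_of_tendsto_nhds_of_eventually_within
    · have : Tendsto (fun x : ℝ => 1/4 - x) (𝓝 (1/4:ℝ)) (𝓝 (1/4 - 1/4)) :=
        (tendsto_const_nhds.sub tendsto_id)
      simpa using this.mono_left nhdsWithin_le_nhds
    · filter_upwards [self_mem_nhdsWithin] with x hx
      have hx' : x < 1/4 := hx
      show (0:ℝ) < 1/4 - x
      linarith
  have hA : Tendsto (fun x : ℝ => (1/4 - x) ^ (-(1/4 - x))) (𝓝[<] (1/4:ℝ)) (𝓝 1) :=
    tendsto_rpow_neg_self.comp h1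
  have hB : Tendsto (fun x : ℝ => (1/4 + x) ^ (-(1/4 + x))) (𝓝[<] (1/4:ℝ))
      (𝓝 ((1/2:ℝ) ^ (-(1/2):ℝ))) := by
    have hc : ContinuousAt (fun x : ℝ => (1/4 + x) ^ (-(1/4 + x))) (1/4) := by
      apply ContinuousAt.rpow
      · exact continuousAt_const.add continuousAt_id
      · exact (continuousAt_const.add continuousAt_id).neg
      · left; norm_num
    have := hc.tendsto.mono_left (nhdsWithin_le_nhds (s := Set.Iio (1/4:ℝ)))
    convert this using 2 <;> norm_num
  have := hA.mul hB
  rw [one_mul] at this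
  have key : (1/2:ℝ) ^ (-(1/2):ℝ) = (2:ℝ) ^ (1/2:ℝ) := by
    rw [Real.rpow_neg (by norm_num), one_div, Real.inv_rpow (by norm_num), inv_inv]
  rw [key] at this
  exact this

theorem cStar_lt_quarter_sqrt (μ : ℝ) (hμ : 2 < μ) :
    (∃ c : ℝ, 0 < c ∧ c < Real.sqrt μ / 4 ∧
      (1 / 4 - c / Real.sqrt μ) ^ (-(1 / 4 - c / Real.sqrt μ))
          * (1 / 4 + c / Real.sqrt μ) ^ (-(1 / 4 + c / Real.sqrt μ))
        < (2 : ℝ) ^ (1 - 1 / μ))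
    ∧ cStar μ < Real.sqrt μ / 4 := by
  have hμ0 : (0:ℝ) < μ := by linarith
  have hs : 0 < Real.sqrt μ := Real.sqrt_pos.mpr hμ0
  -- the target bound
  have hlt : (2:ℝ) ^ (1/2 : ℝ) < (2:ℝ) ^ (1 - 1/μ) := by
    apply Real.rpow_lt_rpow_left_iff (x := 2) one_lt_two |>.mpr
    have : 1/μ < 1/2 := by
      rw [div_lt_div_iff₀ hμ0 (by norm_num)]; linarith
    linarith
  -- find x ∈ (0, 1/4) with g x < 2^(1-1/μ)
  have hev : ∀ᶠ x in 𝓝[<] (1/4:ℝ),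
      (1/4 - x) ^ (-(1/4 - x)) * (1/4 + x) ^ (-(1/4 + x)) < (2:ℝ) ^ (1 - 1/μ) :=
    gtendsto.eventually_lt_const hlt
  have hev2 : ∀ᶠ x in 𝓝[<] (1/4:ℝ), (0:ℝ) < x := by
    apply eventually_nhdsWithin_of_eventually_nhds
    filter_upwards [Ioi_mem_nhds (show (0:ℝ) < 1/4 by norm_num)] with x hx
    exact hx
  obtain ⟨x, hx1, hx0, hx4⟩ := (hev.and (hev2.and self_mem_nhdsWithin)).exists
  replace hx4 : x < 1/4 := hx4
  refine ⟨⟨x * Real.sqrt μ, by positivity, ?_, ?_⟩, ?_⟩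
  · rw [div_eq_mul_inv, mul_comm (Real.sqrt μ)]
    exact mul_lt_mul_of_pos_right hx4 hs |>.trans_eq (by ring)
  · rw [mul_div_assoc, div_self hs.ne', mul_one]
    exact hx1
  · have hmem : x * Real.sqrt μ ∈ {c : ℝ | 0 < c ∧ maxCutF μ c < 0} := by
      constructor
      · positivity
      · unfold maxCutF
        rw [mul_div_assoc, div_self hs.ne', mul_one]
        linarith
    have hbdd : BddBelow {c : ℝ | 0 < c ∧ maxCutF μ c < 0} :=
      ⟨0, fun c hc => hc.1.le⟩
    calc cStar μ ≤ x * Real.sqrt μ := csInf_le hbdd hmem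
      _ < Real.sqrt μ / 4 := by
          rw [div_eq_mul_inv, mul_comm (Real.sqrt μ)]
          exact mul_lt_mul_of_pos_right hx4 hs |>.trans_eq (by ring)
end

section
/- The function g : ℝ → ℝ defined by g(y) = (1/2 − y)^{y − 1/2} · y^{−y} (real powers, with the convention 0^0 = 1) is antitone (non-increasing) on the interval (1/4, 1/2]: for all y₁, y₂ with 1/4 < y₁ ≤ y₂ ≤ 1/2, one has g(y₂) ≤ g(y₁). -/
noncomputable def fAux : ℝ → ℝ := fun y => (y - 1/2) * Real.log (1/2 - y) - y * Real.log y

lemma fAux_deriv {y : ℝ} (hy : y ∈ Set.Ioo (1/4 : ℝ) (1/2)) :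
    HasDerivAt fAux (Real.log (1/2 - y) - Real.log y) y := by
  obtain ⟨hy1, hy2⟩ := hy
  have hpos : (0:ℝ) < 1/2 - y := by linarith
  have hypos : (0:ℝ) < y := by linarith
  have h1 : HasDerivAt (fun x : ℝ => 1/2 - x) (-1) y := by
    exact (hasDerivAt_id' y).const_sub (1/2 : ℝ)
  have hlog : HasDerivAt (fun x : ℝ => Real.log (1/2 - x)) ((-1) / (1/2 - y)) y :=
    h1.log hpos.ne'
  have h2 : HasDerivAt (fun x : ℝ => (x - 1/2) * Real.log (1/2 - x))
      (1 * Real.log (1/2 - y) + (y - 1/2) * ((-1) / (1/2 - y))) y :=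
    ((hasDerivAt_id y).sub_const (1/2)).mul hlog
  have h3 : HasDerivAt (fun x : ℝ => x * Real.log x) (1 * Real.log y + y * y⁻¹) y :=
    (hasDerivAt_id y).mul (Real.hasDerivAt_log hypos.ne')
  have e1 : (y - 1/2) * ((-1) / (1/2 - y)) = 1 := by
    rw [mul_comm, div_mul_eq_mul_div, div_eq_one_iff_eq hpos.ne']; ring
  have e2 : y * y⁻¹ = 1 := mul_inv_cancel₀ hypos.ne'
  have := h2.sub h3
  rw [e1, e2] at this
  convert this using 1
  · rfl
  · rfl
  · rfl
  ring

lemma fAux_anti : StrictAntiOn fAux (Set.Icc (1/4 : ℝ) (1/2)) := by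
  apply strictAntiOn_of_deriv_neg (convex_Icc _ _)
  · have hc : Continuous fun y : ℝ => -((1/2 - y) * Real.log (1/2 - y)) - y * Real.log y := by
      have := Real.continuous_mul_log
      fun_prop
    have : fAux = fun y : ℝ => -((1/2 - y) * Real.log (1/2 - y)) - y * Real.log y := by
      funext y; simp [fAux]; ring
    rw [this]
    exact hc.continuousOn
  · intro y hy
    rw [interior_Icc] at hy
    obtain ⟨ha, hb⟩ := hy
    rw [(fAux_deriv ⟨ha, hb⟩).deriv]
    have : Real.log (1/2 - y) < Real.log y :=
      Real.log_lt_log (by linarith) (by linarith)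
    linarith

lemma g_eq {y : ℝ} (h1 : (0:ℝ) < y) (h2 : y ≤ 1/2) :
    (1/2 - y) ^ (y - 1/2) * y ^ (-y) = Real.exp (fAux y) := by
  have hy : y ^ (-y) = Real.exp (-(y * Real.log y)) := by
    rw [Real.rpow_def_of_pos h1]; ring_nf
  rcases lt_or_eq_of_le h2 with h | h
  · have hpos : (0:ℝ) < 1/2 - y := by linarith
    rw [Real.rpow_def_of_pos hpos, hy, ← Real.exp_add, fAux]
    ring_nf
  · subst h
    rw [sub_self, Real.rpow_zero, one_mul, hy]
    congr 1
    simp [fAux]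

theorem antitone_half_sub_y_pow (y₁ y₂ : ℝ) (h₁ : 1 / 4 < y₁) (h₁₂ : y₁ ≤ y₂)
    (h₂ : y₂ ≤ 1 / 2) :
    (1 / 2 - y₂) ^ (y₂ - 1 / 2) * y₂ ^ (-y₂)
      ≤ (1 / 2 - y₁) ^ (y₁ - 1 / 2) * y₁ ^ (-y₁) := by
  have h01 : (0:ℝ) < y₁ := by linarith
  have h02 : (0:ℝ) < y₂ := by linarith
  rw [g_eq h02 h₂, g_eq h01 (h₁₂.trans h₂), Real.exp_le_exp]
  rcases eq_or_lt_of_le h₁₂ with h | h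
  · subst h; exact le_rfl
  · exact (fAux_anti ⟨h₁.le, h₁₂.trans h₂⟩ ⟨(h₁.trans h).le, h₂⟩ h).le
end
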